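/- Let B₁, B₂ ∈ ℝ² with dist(B₁, B₂) = r > 0. If P and Q both lie in the intersection of the closed balls of radius r centered at B₁ and at B₂, and P and Q lie on the same closed side of the line through B₁ and B₂, then dist(P, Q) ≤ r. -/

import Mathlib

noncomputable section

namespace BNC

/-- The Euclidean plane. -/
abbrev Pt : Type := EuclideanSpace ℝ (Fin 2)

/-- Planar cross product (determinant) of two vectors. -/
def cross (u w : Pt) : ℝ := u 0 * w 1 - u 1 * w 0

/-- `v` lists points in strictly convex position in counterclockwise order:
every point distinct from `v i` and `v (i+1)` lies strictly to the left of the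
directed line from `v i` to `v (i+1)`.  (This also forces no three of the
points to be collinear.) -/
def ConvexCCW {n : ℕ} (v : ZMod n → Pt) : Prop :=
  ∀ i j : ZMod n, j ≠ i → j ≠ i + 1 → 0 < cross (v (i + 1) - v i) (v j - v i)

/-- The cyclic arc of indices `i, i+1, …, j` (mod `n`). -/
def arc {n : ℕ} (i j : ZMod n) : Finset (ZMod n) :=
  Finset.image (fun t : ℕ => i + (t : ZMod n)) (Finset.range ((j - i).val + 1))

/-- The turning angle `τ(i,j)`: the sum over `k ∈ ⟨i+1..j−1⟩` of the unsigned
angle between `v (k+1) − v k` and `v k − v (k−1)`. -/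
def tau {n : ℕ} (v : ZMod n → Pt) (i j : ZMod n) : ℝ :=
  ∑ k ∈ arc (i + 1) (j - 1),
    InnerProductGeometry.angle (v (k + 1) - v k) (v k - v (k - 1))

/-- The length of the segment joining the two points of an unordered pair. -/
def pairDist {n : ℕ} (v : ZMod n → Pt) : Sym2 (ZMod n) → ℝ :=
  Sym2.lift ⟨fun a b => dist (v a) (v b), fun a b => dist_comm (v a) (v b)⟩

/-- The closed segment joining the two points of an unordered pair. -/
def pairSeg {n : ℕ} (v : ZMod n → Pt) : Sym2 (ZMod n) → Set Pt :=
  Sym2.lift ⟨fun a b => segment ℝ (v a) (v b), fun a b => segment_symm ℝ (v a) (v b)⟩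

/-- `M` is a perfect matching of the index set `A`: a set of non-degenerate
unordered pairs of indices from `A` such that every index of `A` belongs to
exactly one pair. -/
def IsMatchingOn {n : ℕ} (A : Set (ZMod n)) (M : Set (Sym2 (ZMod n))) : Prop :=
  (∀ e ∈ M, ¬ e.IsDiag) ∧ (∀ e ∈ M, ∀ k, k ∈ e → k ∈ A) ∧
    (∀ k ∈ A, ∃! e, e ∈ M ∧ k ∈ e)

/-- The closed segments of distinct pairs of `M` are pairwise disjoint. -/
def NonCrossing {n : ℕ} (v : ZMod n → Pt) (M : Set (Sym2 (ZMod n))) : Prop :=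
  ∀ e ∈ M, ∀ e' ∈ M, e ≠ e' → Disjoint (pairSeg v e) (pairSeg v e')

/-- The bottleneck value of a matching: the maximal segment length. -/
def bnM {n : ℕ} (v : ZMod n → Pt) (M : Set (Sym2 (ZMod n))) : ℝ :=
  sSup (pairDist v '' M)

/-- A non-crossing perfect matching of the whole point set. -/
def IsNCMatching {n : ℕ} (v : ZMod n → Pt) (M : Set (Sym2 (ZMod n))) : Prop :=
  IsMatchingOn Set.univ M ∧ NonCrossing v M

/-- A bottleneck matching: a non-crossing matching minimizing the bottleneck value. -/
def IsBottleneck {n : ℕ} (v : ZMod n → Pt) (M : Set (Sym2 (ZMod n))) : Prop :=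
  IsNCMatching v M ∧ ∀ M', IsNCMatching v M' → bnM v M ≤ bnM v M'

/-- A pair is an edge of the full polygon iff it is of the form `{k, k+1}`. -/
def IsPolyEdge {n : ℕ} (e : Sym2 (ZMod n)) : Prop := ∃ k : ZMod n, e = s(k, k + 1)

/-- The diagonals of a matching of the full point set. -/
def fullDiags {n : ℕ} (M : Set (Sym2 (ZMod n))) : Set (Sym2 (ZMod n)) :=
  {e ∈ M | ¬ IsPolyEdge e}

/-- The full polygon: the convex hull of all the points. -/
def fullPoly {n : ℕ} (v : ZMod n → Pt) : Set Pt := convexHull ℝ (Set.range v)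

/-- The interior of the polygon `Poly` minus the union of the segments of the
diagonals from `D`. -/
def regionSpace {n : ℕ} (v : ZMod n → Pt) (Poly : Set Pt) (D : Set (Sym2 (ZMod n))) :
    Set Pt :=
  interior Poly \ ⋃ e ∈ D, pairSeg v e

/-- `R` is a region: the closure of a connected component of the interior of the
polygon minus the union of the diagonal segments. -/
def IsRegion {n : ℕ} (v : ZMod n → Pt) (Poly : Set Pt) (D : Set (Sym2 (ZMod n)))
    (R : Set Pt) : Prop :=
  ∃ x ∈ regionSpace v Poly D, R = closure (connectedComponentIn (regionSpace v Poly D) x)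

/-- The diagonals from `D` whose segment lies on the boundary of `R`. -/
def boundDiags {n : ℕ} (v : ZMod n → Pt) (Poly : Set Pt) (D : Set (Sym2 (ZMod n)))
    (R : Set Pt) : Set (Sym2 (ZMod n)) :=
  {e ∈ D | pairSeg v e ⊆ frontier R}

/-- `R` is a region bounded by exactly `k` diagonals. -/
def KBounded {n : ℕ} (v : ZMod n → Pt) (Poly : Set Pt) (D : Set (Sym2 (ZMod n)))
    (R : Set Pt) (k : ℕ) : Prop :=
  IsRegion v Poly D R ∧ (boundDiags v Poly D R).ncard = k

/-- The graph whose vertices are the diagonals of `D`, two being adjacent iff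
some 2-bounded region has both on its boundary. -/
def cascadeGraph {n : ℕ} (v : ZMod n → Pt) (Poly : Set Pt) (D : Set (Sym2 (ZMod n))) :
    SimpleGraph D where
  Adj a b := a ≠ b ∧ ∃ R : Set Pt, KBounded v Poly D R 2 ∧
      pairSeg v a.1 ⊆ frontier R ∧ pairSeg v b.1 ⊆ frontier R
  symm := by
    constructor
    rintro a b ⟨hab, R, h1, h2, h3⟩
    exact ⟨hab.symm, R, h1, h3, h2⟩
  loopless := by constructor; rintro a ⟨h, -⟩; exact h rfl

/-- The number of cascades: the number of connected components of the cascade graph. -/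
def cascadeCount {n : ℕ} (v : ZMod n → Pt) (Poly : Set Pt) (D : Set (Sym2 (ZMod n))) : ℕ :=
  Nat.card (cascadeGraph v Poly D).ConnectedComponent

/-- A pair is a diagonal relative to the arc `⟨i..j⟩` iff it is neither `{i,j}`
nor of the form `{k, k+1}` with both `k` and `k+1` in the arc. -/
def ArcDiag {n : ℕ} (i j : ZMod n) (e : Sym2 (ZMod n)) : Prop :=
  e ≠ s(i, j) ∧ ∀ k : ZMod n, k ∈ arc i j → k + 1 ∈ arc i j → e ≠ s(k, k + 1)

/-- The convex hull of the points of the arc `⟨i..j⟩`. -/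
def arcPoly {n : ℕ} (v : ZMod n → Pt) (i j : ZMod n) : Set Pt :=
  convexHull ℝ (v '' (arc i j : Set (ZMod n)))

/-- The diagonals (relative to the arc `⟨i..j⟩`) of a matching `M`. -/
def arcDiags {n : ℕ} (i j : ZMod n) (M : Set (Sym2 (ZMod n))) : Set (Sym2 (ZMod n)) :=
  {e ∈ M | ArcDiag i j e}

/-- `M` is admissible for the subproblem `Matching(i,j)`: it is a non-crossing
perfect matching of the points of the arc `⟨i..j⟩`, it has at most one cascade,
and any region whose boundary contains the segment `[v i, v j]` has at most one
diagonal of `M` on its boundary. -/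
def Admissible {n : ℕ} (v : ZMod n → Pt) (i j : ZMod n) (M : Set (Sym2 (ZMod n))) : Prop :=
  IsMatchingOn (↑(arc i j)) M ∧ NonCrossing v M ∧
    cascadeCount v (arcPoly v i j) (arcDiags i j M) ≤ 1 ∧
    ∀ R : Set Pt, IsRegion v (arcPoly v i j) (arcDiags i j M) R →
      segment ℝ (v i) (v j) ⊆ frontier R →
      (boundDiags v (arcPoly v i j) (arcDiags i j M) R).ncard ≤ 1

/-- `S i j`: the optimal value of the subproblem `Matching(i,j)`. -/
def S {n : ℕ} (v : ZMod n → Pt) (i j : ZMod n) : ℝ :=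
  sInf (bnM v '' {M | Admissible v i j M})

/-- The pair `(i,j)` is necessary: every admissible matching attaining `S i j`
contains the pair `{i,j}`. -/
def Necessary {n : ℕ} (v : ZMod n → Pt) (i j : ZMod n) : Prop :=
  ∀ M : Set (Sym2 (ZMod n)), Admissible v i j M → bnM v M = S v i j → s(i, j) ∈ M

/-- The closed right side of the directed line from `v i` to `v j`. -/
def rightClosed {n : ℕ} (v : ZMod n → Pt) (i j : ZMod n) : Set Pt :=
  {P : Pt | cross (v j - v i) (P - v i) ≤ 0}

/-- The region `Π⁺(i,j)`. -/
def PiPlus {n : ℕ} (v : ZMod n → Pt) (i j : ZMod n) : Set Pt :=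
  {P ∈ rightClosed v i j |
    Real.pi / 3 ≤ EuclideanGeometry.angle (v i) P (v j) ∧ dist (v i) (v j) ≤ dist P (v i)}

/-- The region `Π⁻(i,j)`. -/
def PiMinus {n : ℕ} (v : ZMod n → Pt) (i j : ZMod n) : Set Pt :=
  {P ∈ rightClosed v i j |
    Real.pi / 3 ≤ EuclideanGeometry.angle (v i) P (v j) ∧ dist (v i) (v j) ≤ dist P (v j)}

/-- `(i,j)` is a feasible pair: the arc `⟨i..j⟩` has an even number of points. -/
def Feasible {n : ℕ} (i j : ZMod n) : Prop := Even (arc i j).card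

/-- `(i,j)` is a diagonal pair (not an edge, not degenerate). -/
def IsDiagPair {n : ℕ} (i j : ZMod n) : Prop := i ≠ j ∧ j ≠ i + 1 ∧ i ≠ j + 1

/-- `(i,j)` is a candidate diagonal: a feasible diagonal that is necessary and
whose turning angle is at most `2π/3`. -/
def Candidate {n : ℕ} (v : ZMod n → Pt) (i j : ZMod n) : Prop :=
  Feasible i j ∧ IsDiagPair i j ∧ Necessary v i j ∧ tau v i j ≤ 2 * Real.pi / 3

end BNC

/-! Put `b = B₂ - B₁` and measure a vector `w` by `(⟪b, w⟫, cross b w)`; these are its coordinates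
in the orthogonal frame `(b, b⊥)` scaled by `‖b‖ = r`, so the lens becomes the standard lens
`x² + y² ≤ R²`, `(x - R)² + y² ≤ R²` with `R = r²`, and "same side" becomes `y y' ≥ 0`.
If `|y'| ≤ |y|`, the difference of the two points is dominated coordinatewise by `(x, y)` when
`x' ≤ x` and by `(x - R, y)` when `x ≤ x'`; both have length at most `R`. -/

theorem sub_sq_add_sub_sq_le_of_mem_lens {R x y x' y' : ℝ} (hR : 0 ≤ R)
    (h₁ : x ^ 2 + y ^ 2 ≤ R ^ 2) (h₂ : (x - R) ^ 2 + y ^ 2 ≤ R ^ 2)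
    (h₁' : x' ^ 2 + y' ^ 2 ≤ R ^ 2) (h₂' : (x' - R) ^ 2 + y' ^ 2 ≤ R ^ 2)
    (hyy' : 0 ≤ y * y') :
    (x - x') ^ 2 + (y - y') ^ 2 ≤ R ^ 2 := by
  wlog hy : y' ^ 2 ≤ y ^ 2 generalizing x y x' y'
  · have := this h₁' h₂' h₁ h₂ (by rwa [mul_comm]) (by linarith)
    linarith [show (x' - x) ^ 2 + (y' - y) ^ 2 = (x - x') ^ 2 + (y - y') ^ 2 by ring]
  have hy_sub : (y - y') ^ 2 ≤ y ^ 2 := by nlinarith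
  have hx' : 0 ≤ x' ∧ x' ≤ R := by constructor <;> nlinarith
  rcases le_total x' x with hxx' | hxx'
  · have : (x - x') ^ 2 ≤ x ^ 2 := by nlinarith
    linarith
  · have : (x - x') ^ 2 ≤ (x - R) ^ 2 := by nlinarith
    linarith

namespace BNC

theorem cross_sub_right (u w w' : Pt) : cross u (w - w') = cross u w - cross u w' := by
  simp only [cross, PiLp.sub_apply]
  ring

theorem cross_self (u : Pt) : cross u u = 0 := by
  simp only [cross]
  ring

theorem inner_sq_add_cross_sq (u w : Pt) : inner ℝ u w ^ 2 + cross u w ^ 2 = ‖u‖ ^ 2 * ‖w‖ ^ 2 := by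
  simp only [cross, EuclideanSpace.inner_eq_star_dotProduct, EuclideanSpace.norm_sq_eq,
    Fin.sum_univ_two, dotProduct, star_trivial, Real.norm_eq_abs, sq_abs]
  ring

theorem norm_sub_le_of_mem_lens {b p q : Pt} {r : ℝ} (hr : 0 < r) (hb : ‖b‖ = r)
    (hp : ‖p‖ ≤ r) (hpb : ‖p - b‖ ≤ r) (hq : ‖q‖ ≤ r) (hqb : ‖q - b‖ ≤ r)
    (hside : 0 ≤ cross b p * cross b q) :
    ‖p - q‖ ≤ r := by
  have hcoord : ∀ w, ‖w‖ ≤ r → inner ℝ b w ^ 2 + cross b w ^ 2 ≤ (r ^ 2) ^ 2 := fun w hw => by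
    rw [inner_sq_add_cross_sq, hb, sq (r ^ 2)]
    gcongr
  have hbb : inner ℝ b b = r ^ 2 := by rw [real_inner_self_eq_norm_sq, hb]
  have hpb' := hcoord _ hpb
  have hqb' := hcoord _ hqb
  rw [inner_sub_right, cross_sub_right, cross_self, sub_zero, hbb] at hpb' hqb'
  have hlens := sub_sq_add_sub_sq_le_of_mem_lens (sq_nonneg r) (hcoord p hp) hpb'
    (hcoord q hq) hqb' hside
  rw [← inner_sub_right, ← cross_sub_right, inner_sq_add_cross_sq, hb, sq (r ^ 2)] at hlens
  exact (pow_le_pow_iff_left₀ (norm_nonneg _) hr.le two_ne_zero).1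
    (le_of_mul_le_mul_left hlens (by positivity))

end BNC

/-- Two points in the lens of two unit-distance disks, lying on the same closed
side of the line through the centers, are at distance at most the radius. -/
theorem stmt13 (B₁ B₂ P Q : BNC.Pt) (r : ℝ) (hr : 0 < r) (hB : dist B₁ B₂ = r)
    (hP1 : P ∈ Metric.closedBall B₁ r) (hP2 : P ∈ Metric.closedBall B₂ r)
    (hQ1 : Q ∈ Metric.closedBall B₁ r) (hQ2 : Q ∈ Metric.closedBall B₂ r)
    (hside : (0 ≤ BNC.cross (B₂ - B₁) (P - B₁) ∧ 0 ≤ BNC.cross (B₂ - B₁) (Q - B₁)) ∨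
             (BNC.cross (B₂ - B₁) (P - B₁) ≤ 0 ∧ BNC.cross (B₂ - B₁) (Q - B₁) ≤ 0)) :
    dist P Q ≤ r := by
  simp only [Metric.mem_closedBall, dist_eq_norm] at hB hP1 hP2 hQ1 hQ2
  rw [← sub_sub_sub_cancel_right P B₂ B₁] at hP2
  rw [← sub_sub_sub_cancel_right Q B₂ B₁] at hQ2
  have hside' : 0 ≤ BNC.cross (B₂ - B₁) (P - B₁) * BNC.cross (B₂ - B₁) (Q - B₁) := by
    rcases hside with ⟨hP, hQ⟩ | ⟨hP, hQ⟩
    · exact mul_nonneg hP hQ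
    · exact mul_nonneg_of_nonpos_of_nonpos hP hQ
  rw [dist_eq_norm, ← sub_sub_sub_cancel_right P Q B₁]
  exact BNC.norm_sub_le_of_mem_lens hr (by rwa [norm_sub_rev]) hP1 hP2 hQ1 hQ2 hside'
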